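/- arXiv:1804.08738 — 2 statements merged into one kernel-verified Lean document; each statement's English description precedes it below -/
import Mathlib

section
/- Fix n ∈ ℕ. For each i ∈ Fin n let π_i : ℝ → ℝ be a strictly positive component prior density and q_i : ℝ → ℝ → ℝ a strictly positive component proposal density (q_i a b is the density of proposing b from a), and let L : (Fin n → ℝ) → ℝ be a strictly positive likelihood function. For θ, θ̂ : Fin n → ℝ define the MMA transition density (along the path where every component proposal and the final candidate are accepted) Q(θ, θ̂) = min(L θ̂ / L θ, 1) · ∏_{i} [ min( (π_i (θ̂ i) · q_i (θ̂ i) (θ i)) / (π_i (θ i) · q_i (θ i) (θ̂ i)), 1) · q_i (θ i) (θ̂ i) ]. Then detailed balance with respect to the posterior density holds: L θ̂ · (∏_i π_i (θ̂ i)) · Q(θ̂, θ) = L θ · (∏_i π_i (θ i)) · Q(θ, θ̂). -/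
open Finset

/-- The MMA transition density along the path where every component proposal and
the final candidate are accepted. -/
noncomputable def mmaQ (n : ℕ) (π : Fin n → ℝ → ℝ) (q : Fin n → ℝ → ℝ → ℝ)
    (L : (Fin n → ℝ) → ℝ) (θ θ' : Fin n → ℝ) : ℝ :=
  min (L θ' / L θ) 1 *
    ∏ i : Fin n,
      (min ((π i (θ' i) * q i (θ' i) (θ i)) / (π i (θ i) * q i (θ i) (θ' i))) 1 *
        q i (θ i) (θ' i))

private lemma mma_key (x c : ℝ) (hc : 0 < c) : c * min (x / c) 1 = min x c := by
  rw [mul_min_of_nonneg _ _ hc.le, mul_div_cancel₀ _ hc.ne', mul_one]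

/-- Detailed balance of the Modified Metropolis Algorithm with respect to the
posterior density `L θ · ∏ i, π i (θ i)`. -/
theorem mma_detailed_balance (n : ℕ) (π : Fin n → ℝ → ℝ) (q : Fin n → ℝ → ℝ → ℝ)
    (L : (Fin n → ℝ) → ℝ)
    (hπ : ∀ i x, 0 < π i x) (hq : ∀ i a b, 0 < q i a b) (hL : ∀ θ, 0 < L θ)
    (θ θ' : Fin n → ℝ) :
    L θ' * (∏ i : Fin n, π i (θ' i)) * mmaQ n π q L θ' θ =
      L θ * (∏ i : Fin n, π i (θ i)) * mmaQ n π q L θ θ' := by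
  have main : ∀ a b : Fin n → ℝ,
      L b * (∏ i : Fin n, π i (b i)) * mmaQ n π q L b a =
        min (L a) (L b) *
          ∏ i : Fin n, min (π i (a i) * q i (a i) (b i)) (π i (b i) * q i (b i) (a i)) := by
    intro a b
    unfold mmaQ
    have h1 : L b * (∏ i : Fin n, π i (b i)) *
        (min (L a / L b) 1 *
          ∏ i : Fin n,
            (min ((π i (a i) * q i (a i) (b i)) / (π i (b i) * q i (b i) (a i))) 1 *
              q i (b i) (a i))) =
        (L b * min (L a / L b) 1) *
          ∏ i : Fin n, (π i (b i) * q i (b i) (a i)) *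
            min ((π i (a i) * q i (a i) (b i)) / (π i (b i) * q i (b i) (a i))) 1 := by
      simp only [Finset.prod_mul_distrib]
      ring
    rw [h1, mma_key _ _ (hL b)]
    congr 1
    apply Finset.prod_congr rfl
    intro i _
    exact mma_key _ _ (mul_pos (hπ i (b i)) (hq i (b i) (a i)))
  rw [main θ θ', main θ' θ, min_comm]
  congr 1
  apply Finset.prod_congr rfl
  intro i _
  exact min_comm _ _
end

section
/- Let E be a type, π : E → ℝ a strictly positive function, N ∈ ℕ, and θ : Fin (N+1) → E any finite sequence of states. Then (∏_{i=1}^{N} min(π(θ_{i-1}) / π(θ_i), 1)) · π(θ_N) = (∏_{i=1}^{N} min(π(θ_i) / π(θ_{i-1}), 1)) · π(θ_0). Equivalently, the product of reverse-direction Metropolis acceptance probabilities divided by the product of forward-direction acceptance probabilities along the path telescopes to π(θ_0)/π(θ_N). -/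
open Finset

/-- Telescoping identity for Metropolis acceptance probabilities along a path:
the product of reverse-direction acceptance probabilities times `π θ_N` equals the
product of forward-direction acceptance probabilities times `π θ_0`. -/
theorem metropolis_path_telescoping {E : Type*} (π : E → ℝ) (hπ : ∀ x, 0 < π x)
    (N : ℕ) (θ : Fin (N + 1) → E) :
    (∏ i : Fin N, min (π (θ i.castSucc) / π (θ i.succ)) 1) * π (θ (Fin.last N)) =
      (∏ i : Fin N, min (π (θ i.succ) / π (θ i.castSucc)) 1) * π (θ 0) := by
  have h1 : ∀ i : Fin N, min (π (θ i.castSucc) / π (θ i.succ)) 1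
      = min (π (θ i.castSucc)) (π (θ i.succ)) / π (θ i.succ) := fun i => by
    rw [← min_div_div_right (hπ (θ i.succ)).le, div_self (hπ (θ i.succ)).ne']
  have h2 : ∀ i : Fin N, min (π (θ i.succ) / π (θ i.castSucc)) 1
      = min (π (θ i.castSucc)) (π (θ i.succ)) / π (θ i.castSucc) := fun i => by
    rw [← min_div_div_right (hπ (θ i.castSucc)).le, div_self (hπ (θ i.castSucc)).ne',
      min_comm]
  have hprod : (∏ i : Fin N, π (θ i.succ)) * π (θ 0)
      = (∏ i : Fin N, π (θ i.castSucc)) * π (θ (Fin.last N)) := by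
    rw [mul_comm, ← Fin.prod_univ_succ (fun i => π (θ i)),
      Fin.prod_univ_castSucc (fun i => π (θ i))]
  simp only [h1, h2, prod_div_distrib]
  have hb : (∏ i : Fin N, π (θ i.succ)) ≠ 0 :=
    (prod_pos fun i _ => hπ _).ne'
  have ha : (∏ i : Fin N, π (θ i.castSucc)) ≠ 0 :=
    (prod_pos fun i _ => hπ _).ne'
  field_simp
  linear_combination (- ∏ i : Fin N, min (π (θ i.castSucc)) (π (θ i.succ))) * hprod
end
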